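/- arXiv:2403.04999 — 3 statements merged into one kernel-verified Lean document; each statement's English description precedes it below -/
import Mathlib

section
/- Let Σ be a finite nonempty alphabet, n a positive integer, and P ⊆ (Fin n → Σ) a property. Suppose there exists S ∈ P, and there exists U : Fin n → Σ and an integer k ≥ 1 with d(U,P) ≥ k/n. Then for every integer l with 1 ≤ l < k, every adaptive randomized q-query algorithm that is an (l/n)-test for P satisfies q ≥ k/(3l). -/
open scoped Classical

/-- A deterministic adaptive `q`-query strategy over inputs `Fin n → Γ`. -/
structure Strategy (Γ : Type*) (n q : ℕ) where
  query : (i : Fin q) → (Fin i → Γ) → Fin n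
  decide : (Fin q → Γ) → Bool

/-- The answers obtained by running a strategy on input `X`. -/
noncomputable def Strategy.answers {Γ : Type*} {n q : ℕ}
    (S : Strategy Γ n q) (X : Fin n → Γ) (i : Fin q) : Γ :=
  X (S.query i (fun j => Strategy.answers S X ⟨j.val, j.isLt.trans i.isLt⟩))
termination_by i.val

/-- A strategy accepts `X` iff its decision on the answers is `true`. -/
def Strategy.accepts {Γ : Type*} {n q : ℕ} (S : Strategy Γ n q) (X : Fin n → Γ) : Prop :=
  S.decide (S.answers X) = true

/-- Acceptance probability of an adaptive randomized algorithm (a PMF over strategies). -/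
noncomputable def acceptProb {Γ : Type*} {n q : ℕ}
    (μ : PMF (Strategy Γ n q)) (X : Fin n → Γ) : ℝ :=
  (∑' S : Strategy Γ n q, if S.accepts X then μ S else 0).toReal

/-- Normalized Hamming distance. -/
noncomputable def hdist {Γ : Type*} {n : ℕ} (X Y : Fin n → Γ) : ℝ :=
  (Finset.univ.filter fun j => X j ≠ Y j).card / n

/-- Distance from an input to a property. -/
noncomputable def distSet {Γ : Type*} {n : ℕ} (X : Fin n → Γ) (P : Set (Fin n → Γ)) : ℝ :=
  sInf ((fun Y => hdist X Y) '' P)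

/-- `μ` is an `ε`-test for `P`. -/
def IsTest {Γ : Type*} {n q : ℕ} (μ : PMF (Strategy Γ n q))
    (P : Set (Fin n → Γ)) (ε : ℝ) : Prop :=
  (∀ X ∈ P, 2/3 ≤ acceptProb μ X) ∧
  (∀ X : Fin n → Γ, ε ≤ distSet X P → acceptProb μ X ≤ 1/3)

/-- The set of indices where `U` and `V` differ. -/
noncomputable def diffSet {Γ : Type*} {n : ℕ} (U V : Fin n → Γ) : Finset (Fin n) :=
  Finset.univ.filter fun j => U j ≠ V j

/-- `patch U V A` takes the values of `U` on `A` and of `V` elsewhere. -/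
def patch {Γ : Type*} {n : ℕ} (U V : Fin n → Γ) (A : Finset (Fin n)) : Fin n → Γ :=
  fun j => if j ∈ A then U j else V j

/-- `μ` is a `(U,V,l)`-distinguisher. -/
def IsDistinguisher {Γ : Type*} {n q : ℕ} (μ : PMF (Strategy Γ n q))
    (U V : Fin n → Γ) (l : ℕ) : Prop :=
  2/3 ≤ acceptProb μ V ∧
  ∀ A : Finset (Fin n), A ⊆ diffSet U V → A.card = l →
    acceptProb μ (patch U V A) ≤ 1/3

/-- A non-adaptive randomized `q`-query algorithm is a PMF over pairs
(query positions, decision function). -/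
abbrev NAStrategy (Γ : Type*) (n q : ℕ) := (Fin q → Fin n) × ((Fin q → Γ) → Bool)

/-- Acceptance probability of a non-adaptive randomized algorithm. -/
noncomputable def naAcceptProb {Γ : Type*} {n q : ℕ}
    (μ : PMF (NAStrategy Γ n q)) (X : Fin n → Γ) : ℝ :=
  (∑' p : NAStrategy Γ n q, if p.2 (fun i => X (p.1 i)) = true then μ p else 0).toReal

/-- `μ` (non-adaptive) is a `(U,V,l)`-distinguisher. -/
def NAIsDistinguisher {Γ : Type*} {n q : ℕ} (μ : PMF (NAStrategy Γ n q))
    (U V : Fin n → Γ) (l : ℕ) : Prop :=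
  2/3 ≤ naAcceptProb μ V ∧
  ∀ A : Finset (Fin n), A ⊆ diffSet U V → A.card = l →
    naAcceptProb μ (patch U V A) ≤ 1/3

/-- Probability that index `j` appears among the query positions of a
non-adaptive algorithm. -/
noncomputable def queryProb {Γ : Type*} {n q : ℕ}
    (μ : PMF (NAStrategy Γ n q)) (j : Fin n) : ℝ :=
  (∑' p : NAStrategy Γ n q, if ∃ i : Fin q, p.1 i = j then μ p else 0).toReal


/-!
Let `W ∈ P` be closest to `U` and `D` the set of positions where they differ, so `k ≤ |D|`.
Run the test on `W`: a `q`-query strategy queries at most `q` positions of `D`, so the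
probabilities `p j` that position `j` is queried sum to at most `q` over `D`, and some
`l`-subset `A ⊆ D` has `∑_{j ∈ A} p j ≤ l q / |D| ≤ l q / k`. Copying `U` onto `W` along `A`
gives an input `Y` that is `l/n`-far from `P` (it is `l` positions closer to `U` than `W` is),
yet a strategy can tell `Y` from `W` only by querying `A`. The acceptance probabilities
`≥ 2/3` on `W` and `≤ 1/3` on `Y` therefore force `1/3 ≤ l q / k`.
-/

open scoped ENNReal
open Finset MeasureTheory

theorem Finset.exists_subset_card_eq_sum_mul_card_le {ι : Type*} (p : ι → ℝ) (D : Finset ι)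
    {l : ℕ} (hl : l ≤ #D) :
    ∃ A ⊆ D, #A = l ∧ (∑ j ∈ A, p j) * #D ≤ l * ∑ j ∈ D, p j := by
  induction D using Finset.strongInduction with
  | H D ih =>
  rcases hl.eq_or_lt with rfl | hlt
  · exact ⟨D, subset_rfl, rfl, (mul_comm _ _).le⟩
  -- drop a position of maximal weight and recurse
  obtain ⟨j₀, hj₀, hmax⟩ := D.exists_max_image p (card_pos.1 (by omega))
  obtain ⟨A, hAD, hA, hsum⟩ :=
    ih (D.erase j₀) (erase_ssubset hj₀) (by rw [card_erase_of_mem hj₀]; omega)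
  refine ⟨A, hAD.trans (erase_subset _ _), hA, ?_⟩
  have hA_le : ∑ j ∈ A, p j ≤ l * p j₀ := by
    simpa [hA] using sum_le_card_nsmul A p (p j₀) fun j hj => hmax j (mem_of_mem_erase (hAD hj))
  rw [← card_erase_add_one hj₀, ← add_sum_erase D p hj₀]
  push_cast
  linarith

theorem hdist_eq_card_diffSet {Γ : Type*} {n : ℕ} (X Y : Fin n → Γ) :
    hdist X Y = #(diffSet X Y) / n :=
  rfl

theorem hdist_nonneg {Γ : Type*} {n : ℕ} (X Y : Fin n → Γ) : 0 ≤ hdist X Y := by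
  unfold hdist
  positivity

theorem hdist_triangle {Γ : Type*} {n : ℕ} (X Y Z : Fin n → Γ) :
    hdist X Z ≤ hdist X Y + hdist Y Z := by
  unfold hdist
  rw [← add_div]
  gcongr
  refine mod_cast (card_le_card fun j => ?_).trans (card_union_le _ _)
  simp only [mem_filter, mem_union, mem_univ, true_and]
  intro hXZ
  by_contra! hj
  exact hXZ (hj.1.trans hj.2)

theorem distSet_le_hdist {Γ : Type*} {n : ℕ} {X Y : Fin n → Γ} {P : Set (Fin n → Γ)}
    (hY : Y ∈ P) : distSet X P ≤ hdist X Y :=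
  csInf_le ⟨0, by rintro _ ⟨Z, -, rfl⟩; exact hdist_nonneg X Z⟩ (Set.mem_image_of_mem _ hY)

theorem patch_of_notMem {Γ : Type*} {n : ℕ} {U V : Fin n → Γ} {A : Finset (Fin n)} {j : Fin n}
    (hj : j ∉ A) : patch U V A j = V j :=
  if_neg hj

theorem diffSet_patch {Γ : Type*} {n : ℕ} (U V : Fin n → Γ) (A : Finset (Fin n)) :
    diffSet U (patch U V A) = diffSet U V \ A := by
  ext j
  by_cases hj : j ∈ A <;> simp [diffSet, patch, hj]

theorem le_distSet_patch {Γ : Type*} {n : ℕ} {P : Set (Fin n → Γ)} {U W : Fin n → Γ}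
    (hW : W ∈ P) (hmin : ∀ Z ∈ P, hdist U W ≤ hdist U Z) {A : Finset (Fin n)}
    (hA : A ⊆ diffSet U W) : (#A : ℝ) / n ≤ distSet (patch U W A) P := by
  refine le_csInf ⟨_, Set.mem_image_of_mem _ hW⟩ ?_
  rintro _ ⟨Z, hZ, rfl⟩
  have hUY : hdist U (patch U W A) = hdist U W - #A / n := by
    rw [hdist_eq_card_diffSet, hdist_eq_card_diffSet, diffSet_patch,
      card_sdiff_of_subset hA, Nat.cast_sub (card_le_card hA), sub_div]
  linarith [hmin Z hZ, hdist_triangle U (patch U W A) Z]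

namespace Strategy

variable {Γ : Type*} {n q : ℕ} (s : Strategy Γ n q)

noncomputable def queryPos (X : Fin n → Γ) (i : Fin q) : Fin n :=
  s.query i fun j => s.answers X ⟨j, j.isLt.trans i.isLt⟩

theorem answers_eq (X : Fin n → Γ) (i : Fin q) : s.answers X i = X (s.queryPos X i) := by
  rw [answers]
  rfl

noncomputable def queried (X : Fin n → Γ) : Finset (Fin n) :=
  univ.image (s.queryPos X)

theorem card_queried_le (X : Fin n → Γ) : #(s.queried X) ≤ q :=
  card_image_le.trans (card_fin q).le

theorem answers_congr {X Y : Fin n → Γ} (h : ∀ j ∈ s.queried X, Y j = X j) :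
    s.answers Y = s.answers X := by
  funext i
  induction i using WellFoundedLT.induction with
  | ind i ih =>
  have hpos : s.queryPos Y i = s.queryPos X i := by
    unfold queryPos
    congr 1
    funext j
    exact ih _ j.isLt
  rw [answers_eq, answers_eq, hpos]
  exact h _ (mem_image_of_mem _ (mem_univ i))

theorem accepts_congr {X Y : Fin n → Γ} (h : ∀ j ∈ s.queried X, Y j = X j) :
    s.accepts Y ↔ s.accepts X := by
  rw [accepts, accepts, s.answers_congr h]

end Strategy

theorem PMF.toOuterMeasure_ne_top {α : Type*} (p : PMF α) (s : Set α) :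
    p.toOuterMeasure s ≠ ∞ := by
  rw [toOuterMeasure_apply]
  exact p.tsum_coe_indicator_ne_top s

theorem PMF.sum_toOuterMeasure_le {α ι : Type*} (p : PMF α) (D : Finset ι) (E : ι → Set α)
    (q : ℕ) (h : ∀ a, #{j ∈ D | a ∈ E j} ≤ q) :
    ∑ j ∈ D, p.toOuterMeasure (E j) ≤ q := by
  simp_rw [toOuterMeasure_apply]
  rw [← Summable.tsum_finsetSum fun _ _ => ENNReal.summable]
  calc ∑' a, ∑ j ∈ D, (E j).indicator p a = ∑' a, #{j ∈ D | a ∈ E j} * p a := by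
        congr 1
        funext a
        simp only [Set.indicator_apply]
        rw [← sum_filter, sum_const, nsmul_eq_mul]
    _ ≤ ∑' a, q * p a := ENNReal.tsum_le_tsum fun a => by gcongr; exact_mod_cast h a
    _ = q := by rw [ENNReal.tsum_mul_left, p.tsum_coe, mul_one]

section Probability

variable {Γ : Type*} {n q : ℕ} (μ : PMF (Strategy Γ n q))

theorem acceptProb_eq_toOuterMeasure (X : Fin n → Γ) :
    acceptProb μ X = (μ.toOuterMeasure {s | s.accepts X}).toReal := by
  rw [acceptProb, PMF.toOuterMeasure_apply]
  rfl

noncomputable def hitProb (X : Fin n → Γ) (j : Fin n) : ℝ :=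
  (μ.toOuterMeasure {s | j ∈ s.queried X}).toReal

theorem acceptProb_le_add_sum_hitProb {X Y : Fin n → Γ} {A : Finset (Fin n)}
    (h : ∀ j ∉ A, X j = Y j) :
    acceptProb μ X ≤ acceptProb μ Y + ∑ j ∈ A, hitProb μ X j := by
  have hsub : {s : Strategy Γ n q | s.accepts X} ⊆ {s | s.accepts Y} ∪ ⋃ j ∈ A, {s | j ∈ s.queried X} := by
    intro s hs
    by_cases hhit : ∃ j ∈ A, j ∈ s.queried X
    · obtain ⟨j, hjA, hj⟩ := hhit
      exact Or.inr (Set.mem_biUnion hjA hj)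
    · simp only [not_exists, not_and] at hhit
      exact Or.inl ((s.accepts_congr fun j hj => (h j fun hjA => hhit j hjA hj).symm).2 hs)
  have hle := (measure_mono (μ := μ.toOuterMeasure) hsub).trans <| (measure_union_le _ _).trans <|
    add_le_add le_rfl (measure_biUnion_finset_le A _)
  have hfin : ∀ j ∈ A, μ.toOuterMeasure {s | j ∈ s.queried X} ≠ ∞ :=
    fun _ _ => μ.toOuterMeasure_ne_top _
  unfold hitProb
  rw [acceptProb_eq_toOuterMeasure, acceptProb_eq_toOuterMeasure,
    ← ENNReal.toReal_sum hfin, ← ENNReal.toReal_add (μ.toOuterMeasure_ne_top _)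
      (ENNReal.sum_ne_top.2 hfin)]
  exact ENNReal.toReal_mono
    (ENNReal.add_ne_top.2 ⟨μ.toOuterMeasure_ne_top _, ENNReal.sum_ne_top.2 hfin⟩) hle

theorem sum_hitProb_le (X : Fin n → Γ) (D : Finset (Fin n)) : ∑ j ∈ D, hitProb μ X j ≤ q := by
  have hE : ∑ j ∈ D, μ.toOuterMeasure {s | j ∈ s.queried X} ≤ q := by
    refine μ.sum_toOuterMeasure_le D _ q fun s => (card_le_card fun j hj => ?_).trans
      (s.card_queried_le X)
    simp only [mem_filter, Set.mem_ofPred_eq] at hj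
    exact hj.2
  unfold hitProb
  rw [← ENNReal.toReal_sum fun _ _ => μ.toOuterMeasure_ne_top _]
  simpa using ENNReal.toReal_mono (ENNReal.natCast_ne_top q) hE

end Probability

theorem test_lower_bound_general {Γ : Type*} [Fintype Γ] {n : ℕ} (hn : 0 < n)
    (P : Set (Fin n → Γ)) (S : Fin n → Γ) (hS : S ∈ P)
    (U : Fin n → Γ) (k : ℕ) (hU : (k : ℝ) / n ≤ distSet U P)
    (l : ℕ) (hlk : l < k)
    (q : ℕ) (μ : PMF (Strategy Γ n q)) (hμ : IsTest μ P ((l : ℝ) / n)) :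
    (k : ℝ) / (3 * l) ≤ q := by
  obtain ⟨W, hWP, hWmin⟩ := Set.exists_min_image P (hdist U) (Set.toFinite P) ⟨S, hS⟩
  set D := diffSet U W
  have hkD : k ≤ #D := by
    have h := hU.trans (distSet_le_hdist hWP)
    rw [hdist_eq_card_diffSet, div_le_div_iff_of_pos_right (by exact_mod_cast hn)] at h
    exact_mod_cast h
  obtain ⟨A, hAD, hA, hsum⟩ := D.exists_subset_card_eq_sum_mul_card_le (hitProb μ W) (l := l)
    (by omega)
  have hfar : (l : ℝ) / n ≤ distSet (patch U W A) P := hA ▸ le_distSet_patch hWP hWmin hAD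
  have hhit : 1 / 3 ≤ ∑ j ∈ A, hitProb μ W j := by
    linarith [hμ.1 W hWP, hμ.2 _ hfar, acceptProb_le_add_sum_hitProb μ (X := W)
      (Y := patch U W A) fun j hj => (patch_of_notMem hj).symm]
  have hq := sum_hitProb_le μ W D
  have hkD' : (k : ℝ) ≤ #D := mod_cast hkD
  refine div_le_of_le_mul₀ (by positivity) q.cast_nonneg ?_
  calc (k : ℝ) ≤ 3 * (∑ j ∈ A, hitProb μ W j) * #D := by nlinarith
    _ ≤ 3 * (l * ∑ j ∈ D, hitProb μ W j) := by linarith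
    _ ≤ q * (3 * l) := by nlinarith [l.cast_nonneg (α := ℝ)]

/-- **Theorem 1 (meticulous statement).** If a property `P ⊆ Γ^n` admits a satisfying
input `S` and an input `U` with `d(U,P) ≥ k/n` (`k ≥ 1`), then for every `1 ≤ l < k`,
any adaptive randomized `q`-query `(l/n)`-test for `P` satisfies `q ≥ k/(3l)`. -/
theorem test_lower_bound {Γ : Type*} [Fintype Γ] [Nonempty Γ] {n : ℕ} (hn : 0 < n)
    (P : Set (Fin n → Γ)) (S : Fin n → Γ) (hS : S ∈ P)
    (U : Fin n → Γ) (k : ℕ) (hk : 1 ≤ k) (hU : (k : ℝ) / n ≤ distSet U P)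
    (l : ℕ) (hl : 1 ≤ l) (hlk : l < k)
    (q : ℕ) (μ : PMF (Strategy Γ n q)) (hμ : IsTest μ P ((l : ℝ) / n)) :
    (k : ℝ) / (3 * l) ≤ q :=
  test_lower_bound_general hn P S hS U k hU l hlk q μ hμ
end

section
/- Let Σ be a finite nonempty alphabet, n a positive integer, U, V : Fin n → Σ, D = {j : U j ≠ V j}, and l an integer with 1 ≤ l ≤ |D|. If there exists an adaptive randomized q-query algorithm that is a (U,V,l)-distinguisher, then there exists an adaptive randomized q-query algorithm that is a (U,V,l)-distinguisher and, moreover, every query position chosen by any strategy in its support, after any sequence of answers, lies in D. -/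
open scoped Classical

section Aux

variable {Γ : Type*} {n q : ℕ}

/-- Reconstruct the simulated answers of `S`, answering queries outside `D` with `W`. -/
noncomputable def recon (S : Strategy Γ n q) (W : Fin n → Γ) (D : Finset (Fin n))
    (a : Fin q → Γ) (j : Fin q) : Γ :=
  if S.query j (fun k => recon S W D a ⟨k.1, k.2.trans j.isLt⟩) ∈ D then a j
  else W (S.query j (fun k => recon S W D a ⟨k.1, k.2.trans j.isLt⟩))
termination_by j.val

theorem recon_congr (S : Strategy Γ n q) (W : Fin n → Γ) (D : Finset (Fin n))
    (a a' : Fin q → Γ) (j : Fin q) (h : ∀ k : Fin q, k.val ≤ j.val → a k = a' k) :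
    recon S W D a j = recon S W D a' j := by
  rw [recon, recon]
  have hp : (fun k : Fin j.val => recon S W D a ⟨k.1, k.2.trans j.isLt⟩)
      = fun k : Fin j.val => recon S W D a' ⟨k.1, k.2.trans j.isLt⟩ := by
    funext k
    exact recon_congr S W D a a' ⟨k.1, k.2.trans j.isLt⟩
      (fun m hm => h m (le_trans hm (le_of_lt k.isLt)))
  rw [hp, h j le_rfl]
termination_by j.val
decreasing_by exact k.isLt

/-- The transformed strategy: only queries inside `D`, simulating out-of-`D` answers by `V`. -/
noncomputable def sim [Nonempty Γ] (V : Fin n → Γ) (D : Finset (Fin n)) (d₀ : Fin n)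
    (S : Strategy Γ n q) : Strategy Γ n q where
  query i a :=
    let b : Fin q → Γ := fun j => if h : j.val < i.val then a ⟨j.val, h⟩ else Classical.arbitrary Γ
    let p := S.query i fun k => recon S V D b ⟨k.1, k.2.trans i.isLt⟩
    if p ∈ D then p else d₀
  decide a := S.decide (recon S V D a)

theorem recon_answers [Nonempty Γ] (V : Fin n → Γ) (D : Finset (Fin n)) (d₀ : Fin n)
    (S : Strategy Γ n q) (X : Fin n → Γ) (hX : ∀ j, j ∉ D → X j = V j) (i : Fin q) :
    recon S V D ((sim V D d₀ S).answers X) i = S.answers X i := by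
  have hprev : (fun k : Fin i.val =>
        recon S V D ((sim V D d₀ S).answers X) ⟨k.1, k.2.trans i.isLt⟩)
      = fun k : Fin i.val => S.answers X ⟨k.1, k.2.trans i.isLt⟩ := by
    funext k
    exact recon_answers V D d₀ S X hX ⟨k.1, k.2.trans i.isLt⟩
  have hqry : (sim V D d₀ S).query i
        (fun k : Fin i.val => (sim V D d₀ S).answers X ⟨k.1, k.2.trans i.isLt⟩)
      = if S.query i (fun k : Fin i.val => S.answers X ⟨k.1, k.2.trans i.isLt⟩) ∈ D
        then S.query i (fun k : Fin i.val => S.answers X ⟨k.1, k.2.trans i.isLt⟩) else d₀ := by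
    have hb : (fun k : Fin i.val => recon S V D
          (fun j : Fin q => if h : j.val < i.val
            then (sim V D d₀ S).answers X ⟨j.val, h.trans i.isLt⟩ else Classical.arbitrary Γ)
          ⟨k.1, k.2.trans i.isLt⟩)
        = fun k : Fin i.val => S.answers X ⟨k.1, k.2.trans i.isLt⟩ := by
      funext k
      rw [recon_congr S V D _ ((sim V D d₀ S).answers X) ⟨k.1, k.2.trans i.isLt⟩
        (fun m hm => by
          have hmi : m.val < i.val := lt_of_le_of_lt hm k.isLt
          simp only [hmi, dif_pos, Fin.eta])]
      exact recon_answers V D d₀ S X hX ⟨k.1, k.2.trans i.isLt⟩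
    show (if S.query i (fun k : Fin i.val => recon S V D
          (fun j : Fin q => if h : j.val < i.val
            then (sim V D d₀ S).answers X ⟨j.val, h.trans i.isLt⟩ else Classical.arbitrary Γ)
          ⟨k.1, k.2.trans i.isLt⟩) ∈ D
        then S.query i (fun k : Fin i.val => recon S V D
          (fun j : Fin q => if h : j.val < i.val
            then (sim V D d₀ S).answers X ⟨j.val, h.trans i.isLt⟩ else Classical.arbitrary Γ)
          ⟨k.1, k.2.trans i.isLt⟩) else d₀) = _
    rw [hb]
  rw [recon, hprev]
  by_cases hp : S.query i (fun k : Fin i.val => S.answers X ⟨k.1, k.2.trans i.isLt⟩) ∈ D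
  · rw [if_pos hp]
    conv_lhs => rw [Strategy.answers]
    rw [hqry, if_pos hp]
    conv_rhs => rw [Strategy.answers]
  · rw [if_neg hp]
    conv_rhs => rw [Strategy.answers]
    rw [hX _ hp]
termination_by i.val
decreasing_by all_goals exact k.isLt

theorem sim_accepts [Nonempty Γ] (V : Fin n → Γ) (D : Finset (Fin n)) (d₀ : Fin n)
    (S : Strategy Γ n q) (X : Fin n → Γ) (hX : ∀ j, j ∉ D → X j = V j) :
    (sim V D d₀ S).accepts X ↔ S.accepts X := by
  unfold Strategy.accepts
  show S.decide (recon S V D _) = true ↔ _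
  rw [funext (recon_answers V D d₀ S X hX)]

theorem acceptProb_map (μ : PMF (Strategy Γ n q)) (f : Strategy Γ n q → Strategy Γ n q)
    (X : Fin n → Γ) :
    acceptProb (μ.map f) X = (∑' S, if (f S).accepts X then μ S else 0).toReal := by
  unfold acceptProb
  congr 1
  have h1 : ∑' S' : Strategy Γ n q, (if S'.accepts X then (μ.map f) S' else 0)
      = (μ.map f).toOuterMeasure {S' | S'.accepts X} := by
    rw [PMF.toOuterMeasure_apply]
    exact tsum_congr fun S' => by
      rw [Set.indicator_apply]; simp [Set.mem_setOf_eq]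
  rw [h1, PMF.toOuterMeasure_map_apply, PMF.toOuterMeasure_apply]
  exact tsum_congr fun S => by
    rw [Set.indicator_apply]; simp [Set.mem_preimage, Set.mem_setOf_eq]

end Aux

/-- **Lemma 8.** Without loss of generality, a `(U,V,l)`-distinguisher does not take
queries outside `D = {j : U j ≠ V j}`. -/
theorem distinguisher_queries_in_D {Γ : Type*} [Fintype Γ] [Nonempty Γ] {n : ℕ}
    (hn : 0 < n) (U V : Fin n → Γ) (l : ℕ) (hl : 1 ≤ l) (hlD : l ≤ (diffSet U V).card)
    (q : ℕ) (μ : PMF (Strategy Γ n q)) (hμ : IsDistinguisher μ U V l) :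
    ∃ μ' : PMF (Strategy Γ n q), IsDistinguisher μ' U V l ∧
      ∀ S ∈ μ'.support, ∀ (i : Fin q) (a : Fin i → Γ), S.query i a ∈ diffSet U V := by
  set D := diffSet U V with hD
  have hDne : D.Nonempty := Finset.card_pos.mp (lt_of_lt_of_le hl hlD)
  obtain ⟨d₀, hd₀⟩ := hDne
  refine ⟨μ.map (sim V D d₀), ?_, ?_⟩
  · have key : ∀ X : Fin n → Γ, (∀ j, j ∉ D → X j = V j) →
        acceptProb (μ.map (sim V D d₀)) X = acceptProb μ X := by
      intro X hX
      rw [acceptProb_map]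
      unfold acceptProb
      congr 1
      exact tsum_congr fun S => by
        by_cases h : S.accepts X
        · rw [if_pos h, if_pos ((sim_accepts V D d₀ S X hX).mpr h)]
        · rw [if_neg h, if_neg (fun h' => h ((sim_accepts V D d₀ S X hX).mp h'))]
    constructor
    · rw [key V (fun j _ => rfl)]
      exact hμ.1
    · intro A hA hcard
      rw [key (patch U V A) (fun j hj => by
        have : j ∉ A := fun h => hj (hA h)
        simp [patch, this])]
      exact hμ.2 A hA hcard
  · intro S hS i a
    rw [PMF.support_map] at hS
    obtain ⟨S₀, _, rfl⟩ := hS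
    show (if _ ∈ D then _ else d₀) ∈ D
    split
    · assumption
    · exact hd₀
end

section
/- Let Σ be a finite nonempty alphabet, n a positive integer, U, V : Fin n → Σ, D = {j : U j ≠ V j}, and l an integer with 1 ≤ l ≤ |D|. If there exists an adaptive randomized q-query algorithm that is a (U,V,l)-distinguisher, then there exists a non-adaptive randomized q-query algorithm that is a (U,V,l)-distinguisher and all of whose query positions lie in D. -/
open scoped Classical

/-- The query position taken at step `i` when running `S` on input `V`. -/
noncomputable def qpos {Γ : Type*} {n q : ℕ} (S : Strategy Γ n q) (V : Fin n → Γ)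
    (i : Fin q) : Fin n :=
  S.query i (fun j => S.answers V ⟨j.val, j.isLt.trans i.isLt⟩)

lemma answers_eq_qpos {Γ : Type*} {n q : ℕ} (S : Strategy Γ n q) (V : Fin n → Γ)
    (i : Fin q) : S.answers V i = V (qpos S V i) := by
  rw [Strategy.answers]; rfl

lemma answers_congr {Γ : Type*} {n q : ℕ} (S : Strategy Γ n q) (X V : Fin n → Γ)
    (h : ∀ i : Fin q, X (qpos S V i) = V (qpos S V i)) :
    S.answers X = S.answers V := by
  have key : ∀ m : ℕ, ∀ i : Fin q, i.val < m → S.answers X i = S.answers V i := by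
    intro m
    induction m with
    | zero => intro i hi; omega
    | succ m ih =>
      intro i hi
      rw [Strategy.answers, Strategy.answers]
      have hq : (fun j : Fin i.val => S.answers X ⟨j.val, j.isLt.trans i.isLt⟩)
          = (fun j : Fin i.val => S.answers V ⟨j.val, j.isLt.trans i.isLt⟩) := by
        funext j
        refine ih ⟨j.val, j.isLt.trans i.isLt⟩ ?_
        show j.val < m
        have h1 := j.isLt
        omega
      rw [hq]
      exact h i
  funext i
  exact key (i.val + 1) i (Nat.lt_succ_self _)

lemma tsum_ite_eq_toOuterMeasure {α : Type*} (ν : PMF α) (P : α → Prop) [DecidablePred P] :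
    (∑' x : α, if P x then ν x else 0) = ν.toOuterMeasure {x | P x} := by
  rw [PMF.toOuterMeasure_apply]
  refine tsum_congr fun x => ?_
  rw [Set.indicator_apply]
  by_cases h : P x <;> simp [h]

lemma toOuterMeasure_le_one {α : Type*} (ν : PMF α) (s : Set α) :
    ν.toOuterMeasure s ≤ 1 := by
  have h1 : ν.toOuterMeasure Set.univ = 1 :=
    (PMF.toOuterMeasure_apply_eq_one_iff ν Set.univ).mpr (Set.subset_univ _)
  calc ν.toOuterMeasure s ≤ ν.toOuterMeasure Set.univ :=
        ν.toOuterMeasure.mono (Set.subset_univ s)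
    _ = 1 := h1

/-- **Lemma 9.** Without loss of generality, a `(U,V,l)`-distinguisher is non-adaptive
and does not take queries outside `D = {j : U j ≠ V j}`. -/
theorem distinguisher_nonadaptive {Γ : Type*} [Fintype Γ] [Nonempty Γ] {n : ℕ}
    (hn : 0 < n) (U V : Fin n → Γ) (l : ℕ) (hl : 1 ≤ l) (hlD : l ≤ (diffSet U V).card)
    (q : ℕ) (μ : PMF (Strategy Γ n q)) (hμ : IsDistinguisher μ U V l) :
    ∃ μ' : PMF (NAStrategy Γ n q), NAIsDistinguisher μ' U V l ∧
      ∀ p ∈ μ'.support, ∀ i : Fin q, p.1 i ∈ diffSet U V := by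
  classical
  obtain ⟨d0, hd0⟩ : ∃ d, d ∈ diffSet U V :=
    Finset.card_pos.mp (lt_of_lt_of_le hl hlD)
  set D := diffSet U V with hD
  -- the conversion map
  set T : Strategy Γ n q → NAStrategy Γ n q := fun S =>
    (fun i => if qpos S V i ∈ D then qpos S V i else d0,
     fun a => if ∀ i : Fin q, qpos S V i ∈ D → a i = V (qpos S V i)
              then S.decide (S.answers V) else false) with hT
  refine ⟨μ.map T, ⟨?_, ?_⟩, ?_⟩
  · -- completeness on V
    have hsub : {S : Strategy Γ n q | S.accepts V}
        ⊆ T ⁻¹' {p : NAStrategy Γ n q | p.2 (fun i => V (p.1 i)) = true} := by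
      intro S hS
      simp only [Set.mem_preimage, Set.mem_setOf_eq, hT]
      rw [if_pos]
      · exact hS
      · intro i hi
        rw [if_pos hi]
    have hle : μ.toOuterMeasure {S | S.accepts V}
        ≤ (μ.map T).toOuterMeasure {p : NAStrategy Γ n q | p.2 (fun i => V (p.1 i)) = true} := by
      rw [PMF.toOuterMeasure_map_apply]
      exact μ.toOuterMeasure.mono hsub
    have h1 := hμ.1
    unfold acceptProb at h1
    unfold naAcceptProb
    rw [tsum_ite_eq_toOuterMeasure] at h1 ⊢
    refine le_trans h1 ?_
    exact ENNReal.toReal_mono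
      (ne_top_of_le_ne_top ENNReal.one_ne_top (toOuterMeasure_le_one _ _)) hle
  · -- soundness on patches
    intro A hA hcard
    set X := patch U V A with hX
    have hXV : ∀ j : Fin n, j ∉ A → X j = V j := by
      intro j hj
      simp [hX, patch, hj]
    have hsub : T ⁻¹' {p : NAStrategy Γ n q | p.2 (fun i => X (p.1 i)) = true}
        ⊆ {S : Strategy Γ n q | S.accepts X} := by
      intro S hS
      simp only [Set.mem_preimage, Set.mem_setOf_eq, hT] at hS
      by_cases hcond : ∀ i : Fin q, qpos S V i ∈ D → X (if qpos S V i ∈ D then qpos S V i else d0) = V (qpos S V i)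
      · rw [if_pos hcond] at hS
        have hall : ∀ i : Fin q, X (qpos S V i) = V (qpos S V i) := by
          intro i
          by_cases hi : qpos S V i ∈ D
          · have := hcond i hi
            rwa [if_pos hi] at this
          · have hnA : qpos S V i ∉ A := fun h => hi (hA h)
            exact hXV _ hnA
        show S.decide (S.answers X) = true
        rw [answers_congr S X V hall]
        exact hS
      · rw [if_neg hcond] at hS
        exact absurd hS (by simp)
    have hle : (μ.map T).toOuterMeasure {p : NAStrategy Γ n q | p.2 (fun i => X (p.1 i)) = true}
        ≤ μ.toOuterMeasure {S | S.accepts X} := by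
      rw [PMF.toOuterMeasure_map_apply]
      exact μ.toOuterMeasure.mono hsub
    have h2 := hμ.2 A hA hcard
    unfold acceptProb at h2
    unfold naAcceptProb
    rw [tsum_ite_eq_toOuterMeasure] at h2 ⊢
    refine le_trans ?_ h2
    exact ENNReal.toReal_mono
      (ne_top_of_le_ne_top ENNReal.one_ne_top (toOuterMeasure_le_one _ _)) hle
  · -- support condition
    intro p hp i
    rw [PMF.support_map] at hp
    obtain ⟨S, _, rfl⟩ := hp
    simp only [hT]
    by_cases hi : qpos S V i ∈ D
    · rw [if_pos hi]; exact hi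
    · rw [if_neg hi]; exact hd0
end
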